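/- Define U_n = ∫_α^1 e^{βt} P_n(t) dt and W_n = (1/β)(e^β − e^{βα} P_n(α)) for β ≠ 0. Then for every n ≥ 2, U_n = W_n − ((2(n−1)+1)/β) U_{n−1} + U_{n−2} − W_{n−2}. -/

import Mathlib

noncomputable def legendreP (n : ℕ) (t : ℝ) : ℝ :=
  (1 / (2 ^ n * n.factorial : ℝ)) * iteratedDeriv n (fun x : ℝ => (x ^ 2 - 1) ^ n) t

/-!
Integrating by parts against `e^{βt}` gives `∫_α^1 e^{βt} P_k'(t) dt = β (W_k - U_k)`, since
`P_k(1) = 1`. The recurrence is then the integrated form of `P_{n+2}' = (2n+3) P_{n+1} + P_n'`,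
which follows from Rodrigues' formula because `D² (x² - 1)^{n+2}` is a combination of
`(x² - 1)^{n+1}` and `(x² - 1)^n` alone.
-/

open scoped Nat

namespace Polynomial

theorem eval_iterate_derivative_X_sub_C_pow_mul {R : Type*} [CommRing R] (a : R) (n : ℕ)
    (q : R[X]) : (derivative^[n] ((X - C a) ^ n * q)).eval a = n ! * q.eval a := by
  have hvanish : ∀ k ∈ Finset.range (n + 1), k ≠ 0 →
      (n.choose k • (derivative^[n - k] ((X - C a) ^ n) * derivative^[k] q)).eval a = 0 := by
    intro k hk hk0
    rw [iterate_derivative_X_sub_pow, Nat.sub_sub_self (Finset.mem_range_succ_iff.mp hk)]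
    simp [hk0]
  rw [iterate_derivative_mul, eval_finsetSum, Finset.sum_eq_single 0 hvanish (by simp)]
  simp [iterate_derivative_X_sub_pow_self]

theorem iterate_derivative_two_X_sq_sub_one_pow {R : Type*} [CommRing R] (n : ℕ) :
    derivative^[2] ((X ^ 2 - 1 : R[X]) ^ (n + 2)) =
      C (2 * (n + 2) * (2 * n + 3) : R) * (X ^ 2 - 1) ^ (n + 1) +
        C (4 * (n + 1) * (n + 2) : R) * (X ^ 2 - 1) ^ n := by
  have hq : derivative (X ^ 2 - 1 : R[X]) = 2 * X := by
    rw [derivative_sub, derivative_X_sq, derivative_one, sub_zero, map_ofNat]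
  simp only [Function.iterate_succ_apply', Function.iterate_zero_apply, derivative_pow,
    derivative_mul, hq, derivative_natCast, derivative_ofNat, derivative_X, map_add, map_mul,
    map_ofNat, map_natCast, map_one]
  push_cast
  ring

theorem two_pow_mul_factorial_succ {R : Type*} [CommSemiring R] (n : ℕ) :
    (2 ^ (n + 1) * (n + 1)! : R) = 2 * (n + 1) * (2 ^ n * n !) := by
  push_cast [Nat.factorial_succ]
  ring

noncomputable def legendre (K : Type*) [Field K] (n : ℕ) : K[X] :=
  C (2 ^ n * n ! : K)⁻¹ * derivative^[n] ((X ^ 2 - 1) ^ n)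

variable {K : Type*} [Field K] [CharZero K]

theorem legendre_eval_one (n : ℕ) : (legendre K n).eval 1 = 1 := by
  have hsplit : (X ^ 2 - 1 : K[X]) ^ n = (X - C 1) ^ n * (X + 1) ^ n := by
    rw [← mul_pow, map_one]; ring
  have : (n ! : K) ≠ 0 := Nat.cast_ne_zero.mpr n.factorial_ne_zero
  rw [legendre, eval_mul, eval_C, hsplit, eval_iterate_derivative_X_sub_C_pow_mul, eval_pow,
    eval_add, eval_X, eval_one, one_add_one_eq_two]
  field_simp

theorem derivative_legendre_add_two (n : ℕ) :
    derivative (legendre K (n + 2)) =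
      C (2 * n + 3 : K) * legendre K (n + 1) + derivative (legendre K n) := by
  have hD : derivative^[n + 3] ((X ^ 2 - 1 : K[X]) ^ (n + 2)) =
      C (2 * (n + 2) * (2 * n + 3) : K) * derivative^[n + 1] ((X ^ 2 - 1) ^ (n + 1)) +
        C (4 * (n + 1) * (n + 2) : K) * derivative^[n + 1] ((X ^ 2 - 1) ^ n) := by
    rw [Function.iterate_add_apply derivative (n + 1) 2, iterate_derivative_two_X_sq_sub_one_pow,
      iterate_map_add, iterate_derivative_C_mul, iterate_derivative_C_mul]
  have hn1 : (n + 1 : K) ≠ 0 := n.cast_add_one_ne_zero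
  have hn2 : (n + 1 + 1 : K) ≠ 0 := by exact_mod_cast (n + 1).succ_ne_zero
  have hc : (2 ^ n * n ! : K) ≠ 0 := by simp [Nat.factorial_ne_zero]
  have h1 : (2 ^ (n + 2) * (n + 2)! : K)⁻¹ * (2 * (n + 2) * (2 * n + 3)) =
      (2 * n + 3) * (2 ^ (n + 1) * (n + 1)! : K)⁻¹ := by
    rw [two_pow_mul_factorial_succ (n + 1), two_pow_mul_factorial_succ n]
    push_cast
    field_simp
    ring
  have h2 : (2 ^ (n + 2) * (n + 2)! : K)⁻¹ * (4 * (n + 1) * (n + 2)) = (2 ^ n * n ! : K)⁻¹ := by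
    rw [two_pow_mul_factorial_succ (n + 1), two_pow_mul_factorial_succ n]
    push_cast
    field_simp
    ring
  simp only [legendre, derivative_C_mul, ← Function.iterate_succ_apply' derivative]
  rw [hD, mul_add, ← mul_assoc, ← mul_assoc, ← C_mul, ← C_mul, h1, h2, C_mul, mul_assoc]

theorem iteratedDeriv_eval {𝕜 : Type*} [NontriviallyNormedField 𝕜] (p : 𝕜[X]) (n : ℕ) :
    iteratedDeriv n (fun x => p.eval x) = fun x => (derivative^[n] p).eval x := by
  have hsemiconj : Function.Semiconj (fun (q : 𝕜[X]) x => q.eval x) derivative deriv :=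
    fun q => by ext; exact q.deriv.symm
  rw [iteratedDeriv_eq_iterate]
  exact (hsemiconj.iterate_right n p).symm

theorem integral_exp_mul_derivative_eval (p : ℝ[X]) (β a b : ℝ) :
    ∫ t in a..b, Real.exp (β * t) * (derivative p).eval t =
      Real.exp (β * b) * p.eval b - Real.exp (β * a) * p.eval a -
        β * ∫ t in a..b, Real.exp (β * t) * p.eval t := by
  have hexp (t : ℝ) : HasDerivAt (fun t => Real.exp (β * t)) (β * Real.exp (β * t)) t := by
    simpa [mul_comm] using ((hasDerivAt_id t).const_mul β).exp
  rw [intervalIntegral.integral_mul_deriv_eq_deriv_mul (fun t _ => hexp t)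
    (fun t _ => p.hasDerivAt t) (Continuous.intervalIntegrable (by fun_prop) _ _)
    (Continuous.intervalIntegrable (by fun_prop) _ _), ← intervalIntegral.integral_const_mul]
  simp only [mul_assoc]

end Polynomial

open Polynomial

theorem legendreP_eq_eval (n : ℕ) (t : ℝ) : legendreP n t = (legendre ℝ n).eval t := by
  have hu : (fun x : ℝ => (x ^ 2 - 1) ^ n) = fun x => ((X ^ 2 - 1 : ℝ[X]) ^ n).eval x := by
    simp
  rw [legendreP, hu, iteratedDeriv_eval, legendre, eval_mul, eval_C, one_div]

theorem legendre_exp_recurrence_general (α β : ℝ) (hβ : β ≠ 0)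
    (U W : ℕ → ℝ)
    (hU : ∀ n, U n = ∫ t in α..1, Real.exp (β * t) * legendreP n t)
    (hW : ∀ n, W n = (1 / β) * (Real.exp β - Real.exp (β * α) * legendreP n α))
    (n : ℕ) (hn : 2 ≤ n) :
    U n = W n - ((2 * ((n : ℝ) - 1) + 1) / β) * U (n - 1) + U (n - 2) - W (n - 2) := by
  obtain ⟨m, rfl⟩ : ∃ m, n = m + 2 := ⟨n - 2, by omega⟩
  rw [show m + 2 - 1 = m + 1 from rfl, add_tsub_cancel_right]
  have hU' (j : ℕ) : U j = ∫ t in α..1, Real.exp (β * t) * (legendre ℝ j).eval t := by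
    simp only [hU, legendreP_eq_eval]
  have hD (j : ℕ) :
      ∫ t in α..1, Real.exp (β * t) * (derivative (legendre ℝ j)).eval t = β * (W j - U j) := by
    rw [integral_exp_mul_derivative_eval, legendre_eval_one, hW, hU', legendreP_eq_eval]
    field_simp
  have hrec : ∫ t in α..1, Real.exp (β * t) * (derivative (legendre ℝ (m + 2))).eval t =
      (2 * m + 3) * U (m + 1) +
        ∫ t in α..1, Real.exp (β * t) * (derivative (legendre ℝ m)).eval t := by
    simp only [derivative_legendre_add_two, eval_add, eval_mul, eval_C, mul_add,
      mul_left_comm (Real.exp _)]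
    rw [intervalIntegral.integral_add (Continuous.intervalIntegrable (by fun_prop) _ _)
      (Continuous.intervalIntegrable (by fun_prop) _ _), intervalIntegral.integral_const_mul, hU']
  rw [hD, hD] at hrec
  push_cast
  field_simp
  linarith

/-- With `U_n = ∫_α^1 e^{βt} P_n(t) dt` and `W_n = (1/β)(e^β − e^{βα} P_n(α))`, for `n ≥ 2`:
`U_n = W_n − ((2(n−1)+1)/β) U_{n−1} + U_{n−2} − W_{n−2}`. -/
theorem legendre_exp_recurrence (α β : ℝ) (hβ : β ≠ 0) (hα : α ∈ Set.Icc (-1 : ℝ) 1)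
    (U W : ℕ → ℝ)
    (hU : ∀ n, U n = ∫ t in α..1, Real.exp (β * t) * legendreP n t)
    (hW : ∀ n, W n = (1 / β) * (Real.exp β - Real.exp (β * α) * legendreP n α))
    (n : ℕ) (hn : 2 ≤ n) :
    U n = W n - ((2 * ((n : ℝ) - 1) + 1) / β) * U (n - 1) + U (n - 2) - W (n - 2) :=
  legendre_exp_recurrence_general α β hβ U W hU hW n hn
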